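/- arXiv:2409.00498 — 2 statements merged into one kernel-verified Lean document; each statement's English description precedes it below -/
import Mathlib

section
/- Let f : ℝ^n × ℝ^m → ℝ^n, r : ℝ^n × ℝ^m → ℝ and Φ : ℝ^n → ℝ be continuously differentiable, and let T > 0 and x₀ ∈ ℝ^n. Suppose x : [0,T] × ℝ^m → ℝ^n is continuously differentiable and satisfies the controlled ODE ∂x/∂t (t,θ) = f(x(t,θ), θ) with x(0,θ) = x₀ for every control parameter θ ∈ ℝ^m. Fix θ ∈ ℝ^m and let p : [0,T] → ℝ^n be differentiable with ṗ(t) = −∇_x H(x(t,θ), p(t), θ) and terminal condition p(T) = −∇Φ(x(T,θ)), where H(x,p,θ) = ⟨p, f(x,θ)⟩ − r(x,θ) is the Hamiltonian. Then the cost functional J(θ) = Φ(x(T,θ)) + ∫₀ᵀ r(x(t,θ), θ) dt is differentiable at θ with gradient ∇J(θ) = −∫₀ᵀ ∇_θ H(x(t,θ), p(t,θ), θ) dt. -/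
/-!
Differentiating the cost under the integral sign gives
`dJ(θ) w = Φ'(x(T)) v(T) + ∫₀ᵀ (r_x v + r_θ w) dt`, where the sensitivity `v(t) = ∂_θ x(t, θ) w`
solves the variational equation `v' = f_x v + f_θ w` with `v(0) = 0`. The adjoint equation is
exactly what makes `d/dt ⟪p, v⟫ = r_x v + ⟪p, f_θ w⟫`, so integrating and using
`p(T) = -∇Φ(x(T))` eliminates `v`: `dJ(θ) w = ∫₀ᵀ (r_θ w - ⟪p, f_θ w⟫) dt = -∫₀ᵀ ∂_θ H w dt`.
-/

open scoped RealInnerProductSpace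

/-- The Hamiltonian `H(x, p, θ) = ⟪p, f(x, θ)⟫ - r(x, θ)` of the control problem. -/
noncomputable def Ham {n m : ℕ}
    (f : EuclideanSpace ℝ (Fin n) → EuclideanSpace ℝ (Fin m) → EuclideanSpace ℝ (Fin n))
    (r : EuclideanSpace ℝ (Fin n) → EuclideanSpace ℝ (Fin m) → ℝ)
    (x p : EuclideanSpace ℝ (Fin n)) (θ : EuclideanSpace ℝ (Fin m)) : ℝ :=
  ⟪p, f x θ⟫ - r x θ

open Set MeasureTheory Function intervalIntegral InnerProductSpace

section PartialDerivatives

variable {𝕜 E P G : Type*} [NontriviallyNormedField 𝕜]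
  [NormedAddCommGroup E] [NormedSpace 𝕜 E] [NormedAddCommGroup P] [NormedSpace 𝕜 P]
  [NormedAddCommGroup G] [NormedSpace 𝕜 G] {F : E → P → G} {F' : E × P →L[𝕜] G}
  {s : Set E} {y : E} {θ : P}

theorem HasFDerivWithinAt.hasFDerivAt_right_of_prod_univ
    (hF : HasFDerivWithinAt (uncurry F) F' (s ×ˢ univ) (y, θ)) (hy : y ∈ s) :
    HasFDerivAt (F y) (F'.comp (.inr 𝕜 E P)) θ := by
  have h : HasFDerivWithinAt (uncurry F ∘ Prod.mk y) _ univ θ :=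
    hF.comp θ (hasFDerivAt_prodMk_right y θ).hasFDerivWithinAt
      fun ϑ _ => mk_mem_prod hy (mem_univ ϑ)
  exact hasFDerivWithinAt_univ.mp h

theorem HasFDerivAt.hasFDerivAt_left_of_uncurry (hF : HasFDerivAt (uncurry F) F' (y, θ)) :
    HasFDerivAt (fun z => F z θ) (F'.comp (.inl 𝕜 E P)) y :=
  hF.comp (f := fun z => (z, θ)) y (hasFDerivAt_prodMk_left y θ)

theorem DifferentiableOn.differentiable_right_of_prod_univ
    (hF : DifferentiableOn 𝕜 (uncurry F) (s ×ˢ univ)) (hy : y ∈ s) : Differentiable 𝕜 (F y) :=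
  fun ϑ => ((hF (y, ϑ) ⟨hy, mem_univ ϑ⟩).hasFDerivWithinAt.hasFDerivAt_right_of_prod_univ
    hy).differentiableAt

theorem ContDiff.differentiableAt_left (hF : ContDiff 𝕜 1 (uncurry F)) :
    DifferentiableAt 𝕜 (fun z => F z θ) y :=
  (hF.comp (contDiff_id.prodMk contDiff_const)).differentiable one_ne_zero y

theorem ContDiff.differentiableAt_right (hF : ContDiff 𝕜 1 (uncurry F)) :
    DifferentiableAt 𝕜 (F y) θ :=
  (hF.comp (contDiff_const.prodMk contDiff_id)).differentiable one_ne_zero θ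

theorem ContDiffOn.continuousOn_fderiv_right (hF : ContDiffOn 𝕜 1 (uncurry F) (s ×ˢ univ))
    (hs : UniqueDiffOn 𝕜 s) :
    ContinuousOn (fun q : E × P => fderiv 𝕜 (F q.1) q.2) (s ×ˢ univ) := by
  refine ((hF.continuousOn_fderivWithin (hs.prod uniqueDiffOn_univ) le_rfl).clm_comp
    (continuousOn_const (c := ContinuousLinearMap.inr 𝕜 E P))).congr fun q hq => ?_
  exact ((hF.differentiableOn one_ne_zero q hq).hasFDerivWithinAt.hasFDerivAt_right_of_prod_univ
    hq.1).fderiv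

theorem ContDiffOn.continuousOn_fderiv_right_slice
    (hF : ContDiffOn 𝕜 1 (uncurry F) (s ×ˢ univ)) (hs : UniqueDiffOn 𝕜 s) (θ : P) :
    ContinuousOn (fun z => fderiv 𝕜 (F z) θ) s :=
  (hF.continuousOn_fderiv_right hs).comp (continuous_id.prodMk continuous_const).continuousOn
    fun _ hz => ⟨hz, mem_univ θ⟩

theorem ContDiff.continuous_fderiv_right (hF : ContDiff 𝕜 1 (uncurry F)) :
    Continuous (fun q : E × P => fderiv 𝕜 (F q.1) q.2) := by
  rw [← continuousOn_univ, ← univ_prod_univ]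
  exact hF.contDiffOn.continuousOn_fderiv_right uniqueDiffOn_univ

theorem fderiv_uncurry_comp_eq_add {u : P → E} (hF : DifferentiableAt 𝕜 (uncurry F) (u θ, θ))
    (hu : DifferentiableAt 𝕜 u θ) :
    fderiv 𝕜 (fun ϑ => F (u ϑ) ϑ) θ =
      (fderiv 𝕜 (fun z => F z θ) (u θ)).comp (fderiv 𝕜 u θ) + fderiv 𝕜 (F (u θ)) θ := by
  have hcomp : HasFDerivAt (fun ϑ => F (u ϑ) ϑ) _ θ :=
    hF.hasFDerivAt.comp (f := fun ϑ => (u ϑ, ϑ)) θ (hu.hasFDerivAt.prodMk (hasFDerivAt_id θ))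
  rw [hcomp.fderiv, hF.hasFDerivAt.hasFDerivAt_left_of_uncurry.fderiv,
    (hF.hasFDerivAt.hasFDerivWithinAt (s := univ ×ˢ univ)).hasFDerivAt_right_of_prod_univ
      (mem_univ _) |>.fderiv]
  ext w
  simp [← map_add]

end PartialDerivatives

section IntervalIntegrals

variable {E P : Type*} [NormedAddCommGroup E] [NormedSpace ℝ E]
  [NormedAddCommGroup P] [NormedSpace ℝ P] {a b t : ℝ}

theorem integral_eq_sub_of_hasDerivWithinAt_Icc [CompleteSpace E] {f f' : ℝ → E} (hab : a ≤ b)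
    (hf : ∀ t ∈ Icc a b, HasDerivWithinAt f (f' t) (Icc a b) t)
    (hf' : IntervalIntegrable f' volume a b) :
    ∫ t in a..b, f' t = f b - f a :=
  integral_eq_sub_of_hasDeriv_right_of_le hab (fun t ht => (hf t ht).continuousWithinAt)
    (fun t ht => ((hf t (Ioo_subset_Icc_self ht)).hasDerivAt
      (Icc_mem_nhds ht.1 ht.2)).hasDerivWithinAt) hf'

theorem ContinuousOn.hasDerivWithinAt_integral_Icc [CompleteSpace E] {g : ℝ → E}
    (hg : ContinuousOn g (Icc a b)) (ht : t ∈ Icc a b) :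
    HasDerivWithinAt (fun τ => ∫ s in a..τ, g s) (g t) (Icc a b) t := by
  have : Fact (t ∈ Icc a b) := ⟨ht⟩
  exact integral_hasDerivWithinAt_right
    ((hg.mono (Icc_subset_Icc le_rfl ht.2)).intervalIntegrable_of_Icc ht.1)
    (hg.stronglyMeasurableAtFilter_nhdsWithin measurableSet_Icc t) (hg t ht)

theorem ContDiffOn.hasFDerivAt_intervalIntegral [ProperSpace P] {G : ℝ → P → E} {s : Set ℝ}
    (hG : ContDiffOn ℝ 1 (uncurry G) (s ×ˢ univ)) (hs : UniqueDiffOn ℝ s)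
    (hab : uIcc a b ⊆ s) (θ : P) :
    HasFDerivAt (fun ϑ => ∫ t in a..b, G t ϑ) (∫ t in a..b, fderiv ℝ (G t) θ) θ := by
  have hGc : ∀ ϑ, ContinuousOn (fun t => G t ϑ) (uIcc a b) := fun ϑ =>
    hG.continuousOn.comp (continuous_id.prodMk continuous_const).continuousOn
      fun t ht => ⟨hab ht, mem_univ ϑ⟩
  -- `∂_θ G` is bounded on the compact set `[a, b] × closedBall θ 1`, which gives the domination
  obtain ⟨C, hC⟩ := (isCompact_uIcc.prod (isCompact_closedBall θ 1)).exists_bound_of_continuousOn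
    ((hG.continuousOn_fderiv_right hs).mono (prod_mono hab (subset_univ _)))
  refine hasFDerivAt_integral_of_dominated_of_fderiv_le (bound := fun _ => C)
    (Metric.ball_mem_nhds θ one_pos)
    (.of_forall fun ϑ => ((hGc ϑ).mono uIoc_subset_uIcc).aestronglyMeasurable measurableSet_uIoc)
    (hGc θ).intervalIntegrable
    (((hG.continuousOn_fderiv_right_slice hs θ).mono
      (uIoc_subset_uIcc.trans hab)).aestronglyMeasurable measurableSet_uIoc)
    (.of_forall fun t ht ϑ hϑ => hC (t, ϑ) ⟨uIoc_subset_uIcc ht, Metric.ball_subset_closedBall hϑ⟩)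
    intervalIntegrable_const (.of_forall fun t ht ϑ _ => ?_)
  exact ((hG.differentiableOn one_ne_zero).differentiable_right_of_prod_univ
    (hab (uIoc_subset_uIcc ht)) ϑ).hasFDerivAt

end IntervalIntegrals

section Sensitivity

variable {E P : Type*} [NormedAddCommGroup E] [NormedSpace ℝ E]
  [NormedAddCommGroup P] [NormedSpace ℝ P] [ProperSpace P] {x : ℝ → P → E} {a b t : ℝ} {θ : P}

theorem hasDerivWithinAt_fderiv_of_hasDerivWithinAt [CompleteSpace E] {g : ℝ → P → E}
    (hab : a < b) (hxa : DifferentiableAt ℝ (x a) θ)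
    (hg : ContDiffOn ℝ 1 (uncurry g) (Icc a b ×ˢ univ))
    (hode : ∀ ϑ, ∀ s ∈ Icc a b, HasDerivWithinAt (fun τ => x τ ϑ) (g s ϑ) (Icc a b) s)
    (ht : t ∈ Icc a b) :
    HasDerivWithinAt (fun s => fderiv ℝ (x s) θ) (fderiv ℝ (g t) θ) (Icc a b) t := by
  have hrep : ∀ s ∈ Icc a b, x s = fun ϑ => x a ϑ + ∫ τ in a..s, g τ ϑ := by
    intro s hs
    funext ϑ
    have hsub : Icc a s ⊆ Icc a b := Icc_subset_Icc le_rfl hs.2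
    have hgϑ : ContinuousOn (fun τ => g τ ϑ) (Icc a b) :=
      hg.continuousOn.comp (continuous_id.prodMk continuous_const).continuousOn
        fun τ hτ => ⟨hτ, mem_univ ϑ⟩
    rw [integral_eq_sub_of_hasDerivWithinAt_Icc hs.1
      (fun τ hτ => (hode ϑ τ (hsub hτ)).mono hsub)
      ((hgϑ.mono hsub).intervalIntegrable_of_Icc hs.1)]
    abel
  have hD : ∀ s ∈ Icc a b,
      fderiv ℝ (x s) θ = fderiv ℝ (x a) θ + ∫ τ in a..s, fderiv ℝ (g τ) θ := by
    intro s hs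
    rw [hrep s hs]
    refine (hxa.hasFDerivAt.add
      (hg.hasFDerivAt_intervalIntegral (uniqueDiffOn_Icc hab) ?_ θ)).fderiv
    rw [uIcc_of_le hs.1]
    exact Icc_subset_Icc le_rfl hs.2
  have hcont := hg.continuousOn_fderiv_right_slice (uniqueDiffOn_Icc hab) θ
  exact ((hcont.hasDerivWithinAt_integral_Icc ht).const_add _).congr hD (hD t ht)

theorem hasDerivWithinAt_fderiv_apply_of_ode [CompleteSpace E] {f : E → P → E}
    (hf : ContDiff ℝ 1 (uncurry f)) (hab : a < b)
    (hx : ContDiffOn ℝ 1 (uncurry x) (Icc a b ×ˢ univ))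
    (hode : ∀ ϑ, ∀ s ∈ Icc a b, HasDerivWithinAt (fun τ => x τ ϑ) (f (x s ϑ) ϑ) (Icc a b) s)
    (ht : t ∈ Icc a b) (w : P) :
    HasDerivWithinAt (fun s => fderiv ℝ (x s) θ w)
      (fderiv ℝ (fun y => f y θ) (x t θ) (fderiv ℝ (x t) θ w) + fderiv ℝ (f (x t θ)) θ w)
      (Icc a b) t := by
  have hxs : ∀ s ∈ Icc a b, Differentiable ℝ (x s) := fun s hs =>
    (hx.differentiableOn one_ne_zero).differentiable_right_of_prod_univ hs
  have hD := hasDerivWithinAt_fderiv_of_hasDerivWithinAt (g := fun s ϑ => f (x s ϑ) ϑ) hab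
    (hxs a (left_mem_Icc.2 hab.le) θ) (hf.comp_contDiffOn (hx.prodMk contDiffOn_snd)) hode ht
  have hDw := (ContinuousLinearMap.apply ℝ E w).hasFDerivAt.comp_hasDerivWithinAt t hD
  rwa [ContinuousLinearMap.apply_apply,
    fderiv_uncurry_comp_eq_add (hf.differentiable one_ne_zero _) (hxs t ht θ)] at hDw

theorem hasFDerivAt_cost {r : E → P → ℝ} {Φ : E → ℝ} (hr : ContDiff ℝ 1 (uncurry r))
    (hΦ : DifferentiableAt ℝ Φ (x b θ)) (hab : a < b)
    (hx : ContDiffOn ℝ 1 (uncurry x) (Icc a b ×ˢ univ)) :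
    HasFDerivAt (fun ϑ => Φ (x b ϑ) + ∫ t in a..b, r (x t ϑ) ϑ)
      ((fderiv ℝ Φ (x b θ)).comp (fderiv ℝ (x b) θ)
        + ∫ t in a..b, fderiv ℝ (fun ϑ => r (x t ϑ) ϑ) θ) θ := by
  have hxb := (hx.differentiableOn one_ne_zero).differentiable_right_of_prod_univ
    (right_mem_Icc.2 hab.le) θ
  exact (hΦ.hasFDerivAt.comp θ hxb.hasFDerivAt).add
    (ContDiffOn.hasFDerivAt_intervalIntegral (G := fun t ϑ => r (x t ϑ) ϑ)
      (hr.comp_contDiffOn (hx.prodMk contDiffOn_snd)) (uniqueDiffOn_Icc hab)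
      (uIcc_of_le hab.le).subset θ)

end Sensitivity

section Costate

variable {E P : Type*} [NormedAddCommGroup E] [InnerProductSpace ℝ E]
  [NormedAddCommGroup P] [InnerProductSpace ℝ P] {a b : ℝ}

theorem integral_eq_inner_sub_inner_of_adjoint {A : ℝ → E →L[ℝ] E} {ℓ : ℝ → E →L[ℝ] ℝ}
    {β v p p' : ℝ → E} (hab : a ≤ b) (hℓ : ContinuousOn ℓ (Icc a b))
    (hβ : ContinuousOn β (Icc a b))
    (hv : ∀ t ∈ Icc a b, HasDerivWithinAt v (A t (v t) + β t) (Icc a b) t)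
    (hp : ∀ t ∈ Icc a b, HasDerivWithinAt p (p' t) (Icc a b) t)
    (hp' : ∀ t ∈ Icc a b, ∀ u, ⟪p' t, u⟫ = ℓ t u - ⟪p t, A t u⟫) :
    ∫ t in a..b, (ℓ t (v t) + ⟪p t, β t⟫) = ⟪p b, v b⟫ - ⟪p a, v a⟫ := by
  have hvc : ContinuousOn v (Icc a b) := fun t ht => (hv t ht).continuousWithinAt
  have hpc : ContinuousOn p (Icc a b) := fun t ht => (hp t ht).continuousWithinAt
  have hint : ContinuousOn (fun t => ℓ t (v t) + ⟪p t, β t⟫) (Icc a b) :=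
    (hℓ.clm_apply hvc).add (hpc.inner hβ)
  refine integral_eq_sub_of_hasDerivWithinAt_Icc (f := fun t => ⟪p t, v t⟫) hab (fun t ht => ?_)
    (hint.intervalIntegrable_of_Icc hab)
  -- the terms `⟪p, A v⟫` of the product rule cancel
  refine ((hp t ht).inner ℝ (hv t ht)).congr_deriv ?_
  rw [inner_add_right, hp' t ht]
  ring

theorem fderiv_inner_const_sub {g : P → E} {h : P → ℝ} {ϑ : P} (hg : DifferentiableAt ℝ g ϑ)
    (hh : DifferentiableAt ℝ h ϑ) (q : E) :
    fderiv ℝ (fun z => ⟪q, g z⟫ - h z) ϑ = (innerSL ℝ q).comp (fderiv ℝ g ϑ) - fderiv ℝ h ϑ :=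
  (((innerSL ℝ q).hasFDerivAt.comp ϑ hg.hasFDerivAt).sub hh.hasFDerivAt).fderiv

theorem ContinuousOn.fderiv_inner_sub {f : E → P → E} {r : E → P → ℝ} {y p : ℝ → E} {s : Set ℝ}
    (hf : ContDiff ℝ 1 (uncurry f)) (hr : ContDiff ℝ 1 (uncurry r)) (hy : ContinuousOn y s)
    (hp : ContinuousOn p s) (θ : P) :
    ContinuousOn (fun t => fderiv ℝ (fun ϑ => ⟪p t, f (y t) ϑ⟫ - r (y t) ϑ) θ) s := by
  have hH : ContDiff ℝ 1 (uncurry fun (q : E × E) ϑ => ⟪q.2, f q.1 ϑ⟫ - r q.1 ϑ) :=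
    (contDiff_fst.snd.inner ℝ (hf.comp (contDiff_fst.fst.prodMk contDiff_snd))).sub
      (hr.comp (contDiff_fst.fst.prodMk contDiff_snd))
  exact hH.continuous_fderiv_right.comp_continuousOn ((hy.prodMk hp).prodMk continuousOn_const)

variable [CompleteSpace E] [ProperSpace P] {f : E → P → E} {r : E → P → ℝ} {Φ : E → ℝ}
  {x : ℝ → P → E} {p : ℝ → E} {θ : P}

theorem integral_costate_pairing_eq (hf : ContDiff ℝ 1 (uncurry f))
    (hr : ContDiff ℝ 1 (uncurry r)) (hab : a < b)
    (hx : ContDiffOn ℝ 1 (uncurry x) (Icc a b ×ˢ univ))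
    (hode : ∀ ϑ, ∀ t ∈ Icc a b, HasDerivWithinAt (fun s => x s ϑ) (f (x t ϑ) ϑ) (Icc a b) t)
    (hp : ∀ t ∈ Icc a b,
      HasDerivWithinAt p (-(gradient (fun y => ⟪p t, f y θ⟫ - r y θ) (x t θ))) (Icc a b) t)
    (hpb : p b = -(gradient Φ (x b θ))) (w : P) :
    ∫ t in a..b, (fderiv ℝ (fun y => r y θ) (x t θ) (fderiv ℝ (x t) θ w)
        + ⟪p t, fderiv ℝ (f (x t θ)) θ w⟫)
      = -fderiv ℝ Φ (x b θ) (fderiv ℝ (x b) θ w) - ⟪p a, fderiv ℝ (x a) θ w⟫ := by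
  have hxθ : ContinuousOn (fun t => x t θ) (Icc a b) := fun t ht =>
    (hode θ t ht).continuousWithinAt
  have hrx : ContinuousOn (fun t => fderiv ℝ (fun y => r y θ) (x t θ)) (Icc a b) :=
    ((hr.comp (contDiff_id.prodMk contDiff_const)).continuous_fderiv one_ne_zero).comp_continuousOn
      hxθ
  have hfθ : ContinuousOn (fun t => fderiv ℝ (f (x t θ)) θ) (Icc a b) :=
    hf.continuous_fderiv_right.comp_continuousOn (hxθ.prodMk continuousOn_const)
  have hadj : ∀ t ∈ Icc a b, ∀ u,
      ⟪-(gradient (fun y => ⟪p t, f y θ⟫ - r y θ) (x t θ)), u⟫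
        = fderiv ℝ (fun y => r y θ) (x t θ) u - ⟪p t, fderiv ℝ (fun y => f y θ) (x t θ) u⟫ := by
    intro t _ u
    rw [inner_neg_left, inner_gradient_left,
      fderiv_inner_const_sub hf.differentiableAt_left hr.differentiableAt_left]
    simp
  rw [integral_eq_inner_sub_inner_of_adjoint hab.le hrx (hfθ.clm_apply continuousOn_const)
    (fun t ht => hasDerivWithinAt_fderiv_apply_of_ode hf hab hx hode ht w) hp hadj,
    hpb, inner_neg_left, inner_gradient_left]

theorem hasGradientAt_cost_of_costate [CompleteSpace P] (hf : ContDiff ℝ 1 (uncurry f))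
    (hr : ContDiff ℝ 1 (uncurry r)) (hΦ : DifferentiableAt ℝ Φ (x b θ)) (hab : a < b)
    (hx : ContDiffOn ℝ 1 (uncurry x) (Icc a b ×ˢ univ))
    (hode : ∀ ϑ, ∀ t ∈ Icc a b, HasDerivWithinAt (fun s => x s ϑ) (f (x t ϑ) ϑ) (Icc a b) t)
    (hp : ∀ t ∈ Icc a b,
      HasDerivWithinAt p (-(gradient (fun y => ⟪p t, f y θ⟫ - r y θ) (x t θ))) (Icc a b) t)
    (hpb : p b = -(gradient Φ (x b θ))) :
    HasGradientAt (fun ϑ => Φ (x b ϑ) + ∫ t in a..b, r (x t ϑ) ϑ)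
      (-(∫ t in a..b, gradient (fun ϑ => ⟪p t, f (x t θ) ϑ⟫ - r (x t θ) ϑ) θ)
        - (fderiv ℝ (x a) θ).adjoint (p a)) θ := by
  have hrθ : ContinuousOn (fun t => fderiv ℝ (fun ϑ => r (x t ϑ) ϑ) θ) (Icc a b) :=
    ContDiffOn.continuousOn_fderiv_right_slice (F := fun t ϑ => r (x t ϑ) ϑ)
      (hr.comp_contDiffOn (hx.prodMk contDiffOn_snd)) (uniqueDiffOn_Icc hab) θ
  have hHθ := ContinuousOn.fderiv_inner_sub hf hr (fun t ht => (hode θ t ht).continuousWithinAt)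
    (fun t ht => (hp t ht).continuousWithinAt) θ
  rw [hasGradientAt_iff_hasFDerivAt]
  refine (hasFDerivAt_cost hr hΦ hab hx).congr_fderiv (ContinuousLinearMap.ext fun w => ?_)
  have hsum : ∫ t in a..b, (fderiv ℝ (fun y => r y θ) (x t θ) (fderiv ℝ (x t) θ w)
        + ⟪p t, fderiv ℝ (f (x t θ)) θ w⟫) =
      (∫ t in a..b, fderiv ℝ (fun ϑ => r (x t ϑ) ϑ) θ w)
        + ∫ t in a..b, fderiv ℝ (fun ϑ => ⟪p t, f (x t θ) ϑ⟫ - r (x t θ) ϑ) θ w := by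
    rw [← integral_add ((hrθ.clm_apply continuousOn_const).intervalIntegrable_of_Icc hab.le)
      ((hHθ.clm_apply continuousOn_const).intervalIntegrable_of_Icc hab.le)]
    refine integral_congr fun t ht => ?_
    rw [uIcc_of_le hab.le] at ht
    have hxt := (hx.differentiableOn one_ne_zero).differentiable_right_of_prod_univ ht θ
    simp only [fderiv_uncurry_comp_eq_add (hr.differentiable one_ne_zero _) hxt,
      fderiv_inner_const_sub hf.differentiableAt_right hr.differentiableAt_right,
      add_apply, sub_apply, ContinuousLinearMap.comp_apply, innerSL_apply_apply]
    ring
  have hK := integral_costate_pairing_eq hf hr hab hx hode hp hpb w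
  have hgrad : IntervalIntegrable
      (fun t => gradient (fun ϑ => ⟪p t, f (x t θ) ϑ⟫ - r (x t θ) ϑ) θ) volume a b :=
    ((toDual ℝ P).symm.continuous.comp_continuousOn hHθ).intervalIntegrable_of_Icc hab.le
  rw [toDual_apply_apply, inner_sub_left, inner_neg_left, ContinuousLinearMap.adjoint_inner_left,
    real_inner_comm, ← innerSL_apply_apply ℝ, ← (innerSL ℝ w).intervalIntegral_comp_comm hgrad]
  simp only [add_apply, ContinuousLinearMap.comp_apply, coe_innerSL_apply, inner_gradient_right,
    ContinuousLinearMap.intervalIntegral_apply (hrθ.intervalIntegrable_of_Icc hab.le),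
    Real.ringHom_apply]
  linarith

end Costate

/-- The gradient of the cost `J(θ) = Φ(x(T,θ)) + ∫₀ᵀ r(x(t,θ),θ) dt` equals
`-∫₀ᵀ ∇_θ H(x(t,θ), p(t), θ) dt`, where `p` solves the adjoint equation. -/
theorem gradient_cost_eq_neg_integral_gradHam {n m : ℕ}
    (f : EuclideanSpace ℝ (Fin n) → EuclideanSpace ℝ (Fin m) → EuclideanSpace ℝ (Fin n))
    (r : EuclideanSpace ℝ (Fin n) → EuclideanSpace ℝ (Fin m) → ℝ)
    (Φ : EuclideanSpace ℝ (Fin n) → ℝ)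
    (hf : ContDiff ℝ 1 (fun q : EuclideanSpace ℝ (Fin n) × EuclideanSpace ℝ (Fin m) => f q.1 q.2))
    (hr : ContDiff ℝ 1 (fun q : EuclideanSpace ℝ (Fin n) × EuclideanSpace ℝ (Fin m) => r q.1 q.2))
    (hΦ : ContDiff ℝ 1 Φ)
    (T : ℝ) (hT : 0 < T) (x₀ : EuclideanSpace ℝ (Fin n))
    (x : ℝ → EuclideanSpace ℝ (Fin m) → EuclideanSpace ℝ (Fin n))
    (hx : ContDiffOn ℝ 1 (fun q : ℝ × EuclideanSpace ℝ (Fin m) => x q.1 q.2)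
      (Set.Icc 0 T ×ˢ Set.univ))
    (hode : ∀ θ, ∀ t ∈ Set.Icc (0:ℝ) T,
      HasDerivWithinAt (fun s => x s θ) (f (x t θ) θ) (Set.Icc 0 T) t)
    (hinit : ∀ θ, x 0 θ = x₀)
    (θ : EuclideanSpace ℝ (Fin m))
    (p : ℝ → EuclideanSpace ℝ (Fin n))
    (hp : ∀ t ∈ Set.Icc (0:ℝ) T,
      HasDerivWithinAt p (-(gradient (fun y => Ham f r y (p t) θ) (x t θ))) (Set.Icc 0 T) t)
    (hpT : p T = -(gradient Φ (x T θ))) :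
    HasGradientAt (fun ϑ => Φ (x T ϑ) + ∫ t in (0:ℝ)..T, r (x t ϑ) ϑ)
      (-(∫ t in (0:ℝ)..T, gradient (fun ϑ => Ham f r (x t θ) (p t) ϑ) θ)) θ := by
  have hx₀ : fderiv ℝ (x 0) θ = 0 := by
    rw [show x 0 = fun _ => x₀ from funext hinit]
    exact fderiv_const_apply x₀
  have h := hasGradientAt_cost_of_costate hf hr (hΦ.differentiable one_ne_zero _) hT hx hode hp hpT
  rw [hx₀, map_zero, zero_apply, sub_zero] at h
  exact h
end

section
/- Let f : ℝ^n × ℝ^m → ℝ^n and Φ : ℝ^n → ℝ be continuously differentiable, let τ > 0, x₀ ∈ ℝ^n and T ∈ ℕ. For θ ∈ ℝ^m define the discrete trajectory x_0(θ) = x₀ and x_{t+1}(θ) = x_t(θ) + τ f(x_t(θ), θ) for t = 0, …, T−1. Fix θ and define the discrete co-state by p_T = −∇Φ(x_T(θ)) and p_t = p_{t+1} + τ (D_x f(x_t(θ), θ))* p_{t+1} for t = T−1, …, 0, where (D_x f)* denotes the adjoint of the Jacobian of f in its first argument. Then the map θ ↦ Φ(x_T(θ)) is differentiable at θ and its gradient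 equals −τ ∑_{t=0}^{T−1} (D_θ f(x_t(θ), θ))* p_{t+1}, where (D_θ f)* is the adjoint of the Jacobian of f in its second argument. -/
/-- The explicit Euler trajectory `x₀, x_{t+1} = x_t + τ f(x_t, θ)`. -/
noncomputable def eulerTraj {n m : ℕ}
    (f : EuclideanSpace ℝ (Fin n) → EuclideanSpace ℝ (Fin m) → EuclideanSpace ℝ (Fin n))
    (τ : ℝ) (x₀ : EuclideanSpace ℝ (Fin n)) (θ : EuclideanSpace ℝ (Fin m)) : ℕ → EuclideanSpace ℝ (Fin n)
  | 0 => x₀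
  | (t + 1) => eulerTraj f τ x₀ θ t + τ • f (eulerTraj f τ x₀ θ t) θ

/-!
The derivative `A_t` of `θ ↦ x_t(θ)` satisfies the linearised Euler recursion
`A_0 = 0`, `A_{t+1} = A_t + τ (D_x f ∘ A_t + D_θ f)`. Against the co-state recursion this gives
`A_{t+1}* p_{t+1} = A_t* p_t + τ (D_θ f)* p_{t+1}`, which telescopes to
`A_T* p_T = τ ∑_t (D_θ f)* p_{t+1}`. Since `p_T = -∇Φ(x_T)` and the chain rule reads
`∇(Φ ∘ x_T) = A_T* ∇Φ(x_T)`, this is the claim.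
-/

open ContinuousLinearMap Finset

theorem HasFDerivAt.uncurry_comp_prodMk_id {E P F : Type*}
    [NormedAddCommGroup E] [NormedSpace ℝ E] [NormedAddCommGroup P] [NormedSpace ℝ P]
    [NormedAddCommGroup F] [NormedSpace ℝ F]
    {f : E → P → F} {x : P → E} {A : P →L[ℝ] E} {θ : P}
    (hx : HasFDerivAt x A θ) (hf : DifferentiableAt ℝ (fun q : E × P => f q.1 q.2) (x θ, θ)) :
    HasFDerivAt (fun ϑ => f (x ϑ) ϑ)
      (fderiv ℝ (fun y => f y θ) (x θ) ∘L A + fderiv ℝ (f (x θ)) θ) θ := by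
  set D := fderiv ℝ (fun q : E × P => f q.1 q.2) (x θ, θ)
  have hD : HasFDerivAt (fun q : E × P => f q.1 q.2) D (x θ, θ) := hf.hasFDerivAt
  have hDx : fderiv ℝ (fun y => f y θ) (x θ) = D ∘L inl ℝ E P :=
    (hD.comp (f := fun e => (e, θ)) (x θ)
      (hasFDerivAt_prodMk_left (𝕜 := ℝ) (x θ) θ)).fderiv
  have hDθ : fderiv ℝ (f (x θ)) θ = D ∘L inr ℝ E P :=
    (hD.comp (f := fun p => (x θ, p)) θ (hasFDerivAt_prodMk_right (x θ) θ)).fderiv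
  refine (hD.comp (f := fun ϑ => (x ϑ, ϑ)) θ (hx.prodMk (hasFDerivAt_id θ))).congr_fderiv ?_
  rw [hDx, hDθ]
  ext1 v
  exact (comp_inl_add_comp_inr D (A v, v)).symm

section Adjoint

variable {E P : Type*} [NormedAddCommGroup E] [InnerProductSpace ℝ E] [CompleteSpace E]
  [NormedAddCommGroup P] [InnerProductSpace ℝ P] [CompleteSpace P]

theorem HasGradientAt.comp_hasFDerivAt {g : E → ℝ} {g' : E} {x : P → E} {A : P →L[ℝ] E}
    {θ : P} (hg : HasGradientAt g g' (x θ)) (hx : HasFDerivAt x A θ) :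
    HasGradientAt (fun ϑ => g (x ϑ)) (adjoint A g') θ := by
  rw [hasGradientAt_iff_hasFDerivAt] at hg ⊢
  exact (hg.comp θ hx).congr_fderiv (by ext v; simp [adjoint_inner_left])

theorem adjoint_add_smul_comp_add_apply (τ : ℝ) (A : P →L[ℝ] E) (Dx : E →L[ℝ] E)
    (Dθ : P →L[ℝ] E) (q : E) :
    adjoint (A + τ • (Dx ∘L A + Dθ)) q =
      adjoint A (q + τ • adjoint Dx q) + τ • adjoint Dθ q := by
  refine ext_inner_right ℝ fun v => ?_
  simp only [adjoint_inner_left, add_apply, smul_apply, comp_apply, inner_add_left,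
    inner_add_right, real_inner_smul_left, real_inner_smul_right]
  ring

theorem adjoint_apply_eq_sum_of_costate (τ : ℝ) (A : ℕ → P →L[ℝ] E) (Dx : ℕ → E →L[ℝ] E)
    (Dθ : ℕ → P →L[ℝ] E) (p : ℕ → E) (T : ℕ) (hA₀ : A 0 = 0)
    (hA : ∀ t < T, A (t + 1) = A t + τ • (Dx t ∘L A t + Dθ t))
    (hp : ∀ t < T, p t = p (t + 1) + τ • adjoint (Dx t) (p (t + 1))) :
    adjoint (A T) (p T) = τ • ∑ t ∈ range T, adjoint (Dθ t) (p (t + 1)) := by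
  induction T with
  | zero => simp [hA₀]
  | succ T ih =>
    rw [hA T T.lt_succ_self, adjoint_add_smul_comp_add_apply, ← hp T T.lt_succ_self,
      ih (fun t ht => hA t (ht.trans T.lt_succ_self))
        (fun t ht => hp t (ht.trans T.lt_succ_self)), sum_range_succ, smul_add]

end Adjoint

section EulerTraj

variable {n m : ℕ}
  {f : EuclideanSpace ℝ (Fin n) → EuclideanSpace ℝ (Fin m) → EuclideanSpace ℝ (Fin n)}
  (τ : ℝ) (x₀ : EuclideanSpace ℝ (Fin n))

theorem hasFDerivAt_eulerTraj_succ
    (hf : Differentiable ℝ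
      (fun q : EuclideanSpace ℝ (Fin n) × EuclideanSpace ℝ (Fin m) => f q.1 q.2))
    {θ : EuclideanSpace ℝ (Fin m)} {t : ℕ}
    (ht : DifferentiableAt ℝ (fun ϑ => eulerTraj f τ x₀ ϑ t) θ) :
    HasFDerivAt (fun ϑ => eulerTraj f τ x₀ ϑ (t + 1))
      (fderiv ℝ (fun ϑ => eulerTraj f τ x₀ ϑ t) θ +
        τ • (fderiv ℝ (fun y => f y θ) (eulerTraj f τ x₀ θ t) ∘L
          fderiv ℝ (fun ϑ => eulerTraj f τ x₀ ϑ t) θ +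
          fderiv ℝ (f (eulerTraj f τ x₀ θ t)) θ)) θ :=
  ht.hasFDerivAt.add <| (ht.hasFDerivAt.uncurry_comp_prodMk_id (hf _)).const_smul τ

theorem differentiable_eulerTraj
    (hf : Differentiable ℝ
      (fun q : EuclideanSpace ℝ (Fin n) × EuclideanSpace ℝ (Fin m) => f q.1 q.2))
    (t : ℕ) : Differentiable ℝ (fun ϑ => eulerTraj f τ x₀ ϑ t) := by
  induction t with
  | zero => exact differentiable_const x₀
  | succ t ih => exact fun θ => (hasFDerivAt_eulerTraj_succ τ x₀ hf (ih θ)).differentiableAt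

end EulerTraj

theorem discrete_msa_gradient_general {n m : ℕ}
    (f : EuclideanSpace ℝ (Fin n) → EuclideanSpace ℝ (Fin m) → EuclideanSpace ℝ (Fin n))
    (Φ : EuclideanSpace ℝ (Fin n) → ℝ)
    (hf : ContDiff ℝ 1 (fun q : EuclideanSpace ℝ (Fin n) × EuclideanSpace ℝ (Fin m) => f q.1 q.2))
    (hΦ : ContDiff ℝ 1 Φ)
    (τ : ℝ) (x₀ : EuclideanSpace ℝ (Fin n)) (T : ℕ)
    (θ : EuclideanSpace ℝ (Fin m))
    (p : ℕ → EuclideanSpace ℝ (Fin n))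
    (hpT : p T = -(gradient Φ (eulerTraj f τ x₀ θ T)))
    (hp : ∀ t < T, p t = p (t + 1) +
      τ • (ContinuousLinearMap.adjoint
        (fderiv ℝ (fun y => f y θ) (eulerTraj f τ x₀ θ t)) (p (t + 1)))) :
    HasGradientAt (fun ϑ => Φ (eulerTraj f τ x₀ ϑ T))
      (-(τ • ∑ t ∈ Finset.range T,
        ContinuousLinearMap.adjoint (fderiv ℝ (f (eulerTraj f τ x₀ θ t)) θ) (p (t + 1)))) θ := by
  have hfd := hf.differentiable one_ne_zero
  have hx := differentiable_eulerTraj τ x₀ hfd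
  have hsum := adjoint_apply_eq_sum_of_costate τ
    (fun t => fderiv ℝ (fun ϑ => eulerTraj f τ x₀ ϑ t) θ) _ _ p T (fderiv_const_apply x₀)
    (fun t _ => (hasFDerivAt_eulerTraj_succ τ x₀ hfd (hx t θ)).fderiv) hp
  rw [hpT, map_neg, neg_eq_iff_eq_neg] at hsum
  rw [← hsum]
  exact ((hΦ.differentiable one_ne_zero) _).hasGradientAt.comp_hasFDerivAt (hx T θ).hasFDerivAt

/-- Back-propagation through the explicit Euler scheme: the gradient of the terminal cost
`θ ↦ Φ(x_T(θ))` equals `-τ ∑_{t=0}^{T-1} (D_θ f(x_t(θ), θ))* p_{t+1}`, where the discrete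
co-state satisfies `p_T = -∇Φ(x_T(θ))` and `p_t = p_{t+1} + τ (D_x f(x_t(θ), θ))* p_{t+1}`. -/
theorem discrete_msa_gradient {n m : ℕ}
    (f : EuclideanSpace ℝ (Fin n) → EuclideanSpace ℝ (Fin m) → EuclideanSpace ℝ (Fin n))
    (Φ : EuclideanSpace ℝ (Fin n) → ℝ)
    (hf : ContDiff ℝ 1 (fun q : EuclideanSpace ℝ (Fin n) × EuclideanSpace ℝ (Fin m) => f q.1 q.2))
    (hΦ : ContDiff ℝ 1 Φ)
    (τ : ℝ) (hτ : 0 < τ) (x₀ : EuclideanSpace ℝ (Fin n)) (T : ℕ)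
    (θ : EuclideanSpace ℝ (Fin m))
    (p : ℕ → EuclideanSpace ℝ (Fin n))
    (hpT : p T = -(gradient Φ (eulerTraj f τ x₀ θ T)))
    (hp : ∀ t < T, p t = p (t + 1) +
      τ • (ContinuousLinearMap.adjoint
        (fderiv ℝ (fun y => f y θ) (eulerTraj f τ x₀ θ t)) (p (t + 1)))) :
    HasGradientAt (fun ϑ => Φ (eulerTraj f τ x₀ ϑ T))
      (-(τ • ∑ t ∈ Finset.range T,
        ContinuousLinearMap.adjoint (fderiv ℝ (f (eulerTraj f τ x₀ θ t)) θ) (p (t + 1)))) θ :=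
  discrete_msa_gradient_general f Φ hf hΦ τ x₀ T θ p hpT hp
end
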